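/- arXiv:1110.1003 — 2 statements merged into one kernel-verified Lean document; each statement's English description precedes it below -/
import Mathlib

section
/- Let k be an infinite cardinal. (1) If a metrizable strongly zero-dimensional space X is locally σLW(<k) + 𝒢_δσ (i.e., every point of X has a neighborhood which belongs to σLW(<k) + 𝒢_δσ), then X itself belongs to σLW(<k) + 𝒢_δσ. (2) If X = ∪_{i∈ω} X_i where each subspace X_i belongs to σLW(<k) + 𝒢_δσ, then X belongs to σLW(<k) + 𝒢_δσ. -/
open Topology Set Filter

universe u v

noncomputable section

/-- Strong zero-dimensionality (`Ind X = 0`): any two disjoint closed sets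
can be separated by a clopen set. -/
def StronglyZeroDim (X : Type*) [TopologicalSpace X] : Prop :=
  ∀ A B : Set X, IsClosed A → IsClosed B → Disjoint A B →
    ∃ U : Set X, IsClopen U ∧ A ⊆ U ∧ Disjoint B U

/-- The topological weight of a space: the least cardinality of a base. -/
def topWeight (X : Type u) [TopologicalSpace X] : Cardinal.{u} :=
  ⨅ B : {B : Set (Set X) // TopologicalSpace.IsTopologicalBasis B}, Cardinal.mk B.1

/-- The space has a base of cardinality `< k`. -/
def WeightLT (X : Type u) [TopologicalSpace X] (k : Cardinal.{u}) : Prop :=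
  ∃ B : Set (Set X), TopologicalSpace.IsTopologicalBasis B ∧ Cardinal.mk B < k

/-- Every point has a neighborhood of weight `< k`. -/
def LocallyWeightLT (X : Type u) [TopologicalSpace X] (k : Cardinal.{u}) : Prop :=
  ∀ x : X, ∃ s : Set X, s ∈ nhds x ∧ WeightLT ↥s k

/-- `X ∈ σLW(<k)`: `X` is a countable union of subspaces, each locally of weight `< k`. -/
def SigmaLW (X : Type u) [TopologicalSpace X] (k : Cardinal.{u}) : Prop :=
  ∃ S : ℕ → Set X, (⋃ n, S n) = Set.univ ∧ ∀ n, LocallyWeightLT ↥(S n) k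

/-- A `G_δσ`-subset: a countable union of `G_δ`-sets. -/
def IsGdeltaSigma {Y : Type*} [TopologicalSpace Y] (s : Set Y) : Prop :=
  ∃ G : ℕ → Set Y, (∀ n, IsGδ (G n)) ∧ s = ⋃ n, G n

/-- An `F_σ`-subset: a countable union of closed sets. -/
def IsFsigmaSet {Y : Type*} [TopologicalSpace Y] (s : Set Y) : Prop :=
  ∃ F : ℕ → Set Y, (∀ n, IsClosed (F n)) ∧ s = ⋃ n, F n

/-- An `F_σδ`-subset: a countable intersection of `F_σ`-sets. -/
def IsFsigmaDelta {Y : Type*} [TopologicalSpace Y] (s : Set Y) : Prop :=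
  ∃ F : ℕ → Set Y, (∀ n, IsFsigmaSet (F n)) ∧ s = ⋂ n, F n

/-- An absolute `G_δσ`-set: a metrizable space whose image under every embedding
into a metrizable space is a countable union of `G_δ`-sets. -/
def AbsGdeltaSigma (X : Type u) [TopologicalSpace X] : Prop :=
  TopologicalSpace.MetrizableSpace X ∧
    ∀ (Y : Type u) [TopologicalSpace Y] [TopologicalSpace.MetrizableSpace Y]
      (f : X → Y), Topology.IsEmbedding f → IsGdeltaSigma (Set.range f)

/-- An absolute `F_σδ`-set: a metrizable space whose image under every embedding
into a metrizable space is an `F_σδ`-set. -/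
def AbsFsigmaDelta (X : Type u) [TopologicalSpace X] : Prop :=
  TopologicalSpace.MetrizableSpace X ∧
    ∀ (Y : Type u) [TopologicalSpace Y] [TopologicalSpace.MetrizableSpace Y]
      (f : X → Y), Topology.IsEmbedding f → IsFsigmaDelta (Set.range f)

/-- `X ∈ σLW(<k) + 𝒢_δσ` : `X = A ∪ B` with `A ∈ σLW(<k)` and `B` an absolute
`G_δσ`-set. -/
def SLWplusGDS (X : Type u) [TopologicalSpace X] (k : Cardinal.{u}) : Prop :=
  ∃ A B : Set X, A ∪ B = Set.univ ∧ SigmaLW ↥A k ∧ AbsGdeltaSigma ↥B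

/-- No nonempty open subspace is `σLW(<k) + 𝒢_δσ`. -/
def NowhereSLWplusGDS (X : Type u) [TopologicalSpace X] (k : Cardinal.{u}) : Prop :=
  ∀ U : Set X, IsOpen U → U.Nonempty → ¬ SLWplusGDS ↥U k

/-- A space is of first category if it is meager in itself. -/
def FirstCategory (X : Type*) [TopologicalSpace X] : Prop :=
  IsMeagre (Set.univ : Set X)

/-- A Souslin (analytic) subset of a space:
`s = ⋃_{t ∈ ω^ω} ⋂_n F(t↾n)` for a family of closed sets indexed by finite tuples. -/
def IsSuslinIn {Y : Type*} [TopologicalSpace Y] (s : Set Y) : Prop :=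
  ∃ F : List ℕ → Set Y, (∀ l, IsClosed (F l)) ∧
    s = ⋃ t : ℕ → ℕ, ⋂ n : ℕ, F (List.ofFn fun i : Fin n => t i)

/-- An absolute Souslin space: metrizable, and Souslin in every completely metrizable
space into which it embeds. -/
def AbsSuslin (X : Type u) [TopologicalSpace X] : Prop :=
  TopologicalSpace.MetrizableSpace X ∧
    ∀ (Y : Type u) [MetricSpace Y] [CompleteSpace Y] (f : X → Y),
      Topology.IsEmbedding f → IsSuslinIn (Set.range f)

/-- An h-homogeneous space: every nonempty clopen subset is homeomorphic to the
whole space. -/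
def HHomogeneous (X : Type*) [TopologicalSpace X] : Prop :=
  ∀ U : Set X, IsClopen U → U.Nonempty → Nonempty (↥U ≃ₜ X)

/-- A discrete family of sets: every point has a neighborhood meeting at most one
member of the family. -/
def DiscreteFamily {X : Type*} [TopologicalSpace X] {ι : Type*} (f : ι → Set X) : Prop :=
  ∀ x : X, ∃ U ∈ nhds x, {i | (f i ∩ U).Nonempty}.Subsingleton

/-- A discrete space of cardinality `k`. -/
def DiscT (k : Cardinal.{u}) : Type u := k.out

instance (k : Cardinal.{u}) : TopologicalSpace (DiscT k) := ⊥
instance (k : Cardinal.{u}) : DiscreteTopology (DiscT k) := ⟨rfl⟩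

/-- The Baire space `B(k) = k^ω`. -/
def BaireB (k : Cardinal.{u}) : Type u := ℕ → DiscT k

instance (k : Cardinal.{u}) : TopologicalSpace (BaireB k) :=
  inferInstanceAs (TopologicalSpace (ℕ → DiscT k))

open Classical in
/-- The discrete factor of `B*(k)`: two points if `k = ℵ₀`, and `k` points otherwise. -/
def StarT (k : Cardinal.{u}) : Type u :=
  if k = Cardinal.aleph0 then ULift Bool else DiscT k

instance (k : Cardinal.{u}) : TopologicalSpace (StarT k) := ⊥
instance (k : Cardinal.{u}) : DiscreteTopology (StarT k) := ⟨rfl⟩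

/-- `B*(k)`: the Cantor set `2^ω` if `k = ℵ₀`, and the Baire space `B(k)` if `k > ℵ₀`. -/
def BaireStar (k : Cardinal.{u}) : Type u := ℕ → StarT k

instance (k : Cardinal.{u}) : TopologicalSpace (BaireStar k) :=
  inferInstanceAs (TopologicalSpace (ℕ → StarT k))

/-- A discrete space of cardinality `k` (for infinite `k`), with a distinguished basepoint. -/
def QBase (k : Cardinal.{u}) : Type u := DiscT k ⊕ PUnit.{u + 1}

instance (k : Cardinal.{u}) : TopologicalSpace (QBase k) := ⊥
instance (k : Cardinal.{u}) : DiscreteTopology (QBase k) := ⟨rfl⟩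

/-- `Q(k)`: the σ-product of `ω` copies of a discrete space of cardinality `k`, i.e.
the subspace of the product consisting of the sequences eventually equal to the basepoint. -/
def Qk (k : Cardinal.{u}) : Type u :=
  {x : ℕ → QBase k // ∀ᶠ n in Filter.atTop, x n = Sum.inr PUnit.unit}

instance (k : Cardinal.{u}) : TopologicalSpace (Qk k) :=
  inferInstanceAs (TopologicalSpace
    {x : ℕ → QBase k // ∀ᶠ n in Filter.atTop, x n = Sum.inr PUnit.unit})

/-- The countable power `Q(k)^ω`. -/
def QkOmega (k : Cardinal.{u}) : Type u := ℕ → Qk k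

instance (k : Cardinal.{u}) : TopologicalSpace (QkOmega k) :=
  inferInstanceAs (TopologicalSpace (ℕ → Qk k))

/-- `Z` is homeomorphic to `Q(k)^ω`. -/
def IsQkOmega (k : Cardinal.{u}) (Z : Type*) [TopologicalSpace Z] : Prop :=
  Nonempty (Z ≃ₜ QkOmega k)

/-- `Z` is homeomorphic to `A^{II}_k`, the complement in `B*(k)` of a dense copy of
`Q(k)^ω`. -/
def IsAII (k : Cardinal.{u}) (Z : Type*) [TopologicalSpace Z] : Prop :=
  ∃ A : Set (BaireStar k), Dense A ∧ IsQkOmega k ↥A ∧ Nonempty (Z ≃ₜ ↥(Aᶜ))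

/-- `Z` is homeomorphic to `A^I_k = Q × A^{II}_k`. -/
def IsAI (k : Cardinal.{u}) (Z : Type*) [TopologicalSpace Z] : Prop :=
  ∃ A : Set (BaireStar k), Dense A ∧ IsQkOmega k ↥A ∧ Nonempty (Z ≃ₜ (ℚ × ↥(Aᶜ)))

/-- `Z` is homeomorphic to `M^{II}_k`, the complement in `B*(k)` of a dense copy of
`A^I_k`. -/
def IsMII (k : Cardinal.{u}) (Z : Type*) [TopologicalSpace Z] : Prop :=
  ∃ Y : Set (BaireStar k), Dense Y ∧ IsAI k ↥Y ∧ Nonempty (Z ≃ₜ ↥(Yᶜ))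

/-- `X ∈ 𝓕_σδ ∖ σLW(<k)`: `X` is homeomorphic to `F ∖ L` for some absolute
`F_σδ`-space `F` and some `L ⊆ F` with `L ∈ σLW(<k)`. -/
def FsdMinusSLW (X : Type u) [TopologicalSpace X] (k : Cardinal.{u}) : Prop :=
  ∃ (F : TopCat.{u}) (L : Set F), AbsFsigmaDelta ↥F ∧ SigmaLW ↥L k ∧
    Nonempty (X ≃ₜ ↥(Lᶜ))

/-- No nonempty open subspace is in the class `𝓕_σδ ∖ σLW(<k)`. -/
def NowhereFsdMinusSLW (X : Type u) [TopologicalSpace X] (k : Cardinal.{u}) : Prop :=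
  ∀ U : Set X, IsOpen U → U.Nonempty → ¬ FsdMinusSLW ↥U k

/-- A topologically complete (i.e. completely metrizable) space. -/
def CompletelyMetrizable (X : Type*) [t : TopologicalSpace X] : Prop :=
  ∃ m : MetricSpace X, m.toUniformSpace.toTopologicalSpace = t ∧
    @CompleteSpace X m.toUniformSpace

end

/-!
Both parts reduce to two closure properties of the class `σLW(<k) + 𝒢_δσ` of subspaces of a
metric space `X`: countable unions, and unions `⋃ i, s i ∩ V i` along pairwise disjoint open
sets `V i`. For `σLW(<k)` both are immediate, as being locally of weight `< k` is local.
For absolute `G_δσ` sets one works in the completion `X̂`: `B ⊆ X` is an absolute `G_δσ` iff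
its image is `G_δσ` in `X̂`, because `G_δ` subsets of complete spaces are completely metrizable
and completely metrizable subspaces of metric spaces are `G_δ`. Disjoint open sets of `X` extend
to disjoint open sets of `X̂` by density, and a union of `G_δ` sets lying in disjoint open sets is
`G_δ`. Part (1) then follows from Stone's argument: an open cover of a metric space is refined by
countably many families of pairwise disjoint open sets.
-/

open TopologicalSpace Function

theorem IsOpen.isCompletelyMetrizableSpace {X : Type*} [TopologicalSpace X]
    [IsCompletelyMetrizableSpace X] {U : Set X} (hU : IsOpen U) :
    IsCompletelyMetrizableSpace U :=
  letI := upgradeIsCompletelyMetrizable X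
  inferInstanceAs (IsCompletelyMetrizableSpace (Opens.CompleteCopy ⟨U, hU⟩))

theorem IsGδ.isCompletelyMetrizableSpace {X : Type*} [TopologicalSpace X]
    [IsCompletelyMetrizableSpace X] {s : Set X} (hs : IsGδ s) :
    IsCompletelyMetrizableSpace s := by
  obtain ⟨U, hUo, rfl⟩ := hs.eq_iInter_nat
  have := fun n => (hUo n).isCompletelyMetrizableSpace
  -- `⋂ n, U n` embeds into `Π n, U n` as the diagonal, a closed subset
  let g : ↥(⋂ n, U n) → ∀ n, ↥(U n) := fun x n => ⟨x, mem_iInter.1 x.2 n⟩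
  have hg : IsEmbedding g :=
    .of_comp (by fun_prop) ((continuous_apply 0).subtype_val) IsEmbedding.subtypeVal
  have hrange : range g = ⋂ n, {f | (f n : X) = f 0} := by
    ext f
    simp only [mem_range, mem_iInter, mem_ofPred_eq]
    refine ⟨fun ⟨x, hx⟩ n => hx ▸ rfl, fun hf => ?_⟩
    exact ⟨⟨f 0, mem_iInter.2 fun n => hf n ▸ (f n).2⟩,
      funext fun n => Subtype.ext (hf n).symm⟩
  refine IsClosedEmbedding.IsCompletelyMetrizableSpace (f := g) ⟨hg, ?_⟩
  rw [hrange]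
  exact isClosed_iInter fun n =>
    isClosed_eq (continuous_apply n).subtype_val (continuous_apply 0).subtype_val

theorem Topology.IsEmbedding.isGδ_range {Z Y : Type*} [TopologicalSpace Z]
    [IsCompletelyMetrizableSpace Z] [TopologicalSpace Y] [MetrizableSpace Y] {g : Z → Y}
    (hg : IsEmbedding g) : IsGδ (range g) := by
  let := upgradeIsCompletelyMetrizable Z
  let := metrizableSpaceMetric Y
  -- a point `y` of the closure lies in the range iff `comap g (𝓝 y)` is Cauchy,
  -- i.e. iff `y ∈ ⋂ n, D n`
  let D : ℕ → Set Y := fun n =>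
    {y | ∃ V ∈ 𝓝 y, ∀ a ∈ g ⁻¹' V, ∀ b ∈ g ⁻¹' V, dist a b < 1 / (n + 1)}
  have hD : ∀ n, IsOpen (D n) := fun n => isOpen_iff_mem_nhds.2 fun y ⟨V, hV, hdiam⟩ =>
    mem_of_superset (interior_mem_nhds.2 hV) fun y' hy' =>
      ⟨V, mem_interior_iff_mem_nhds.1 hy', hdiam⟩
  suffices range g = closure (range g) ∩ ⋂ n, D n by
    rw [this]
    exact isClosed_closure.isGδ.inter (.iInter fun n => (hD n).isGδ)
  refine (subset_inter subset_closure ?_).antisymm ?_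
  · rintro _ ⟨z, rfl⟩
    refine mem_iInter.2 fun n => ?_
    obtain ⟨t, ht, hdiam⟩ :=
      (Metric.cauchy_iff.1 (cauchy_nhds (a := z))).2 _ Nat.one_div_pos_of_nat
    rw [hg.isInducing.nhds_eq_comap] at ht
    obtain ⟨V, hV, hVt⟩ := ht
    exact ⟨V, hV, fun a ha b hb => hdiam a (hVt ha) b (hVt hb)⟩
  · rintro y ⟨hy, hyD⟩
    have : (comap g (𝓝 y)).NeBot := by
      rw [comap_neBot_iff]
      intro t ht
      obtain ⟨_, hyt, z, rfl⟩ := mem_closure_iff_nhds.1 hy t ht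
      exact ⟨z, hyt⟩
    have hcauchy : Cauchy (comap g (𝓝 y)) := by
      refine Metric.cauchy_iff.2 ⟨inferInstance, fun ε hε => ?_⟩
      obtain ⟨n, hn⟩ := exists_nat_one_div_lt hε
      obtain ⟨V, hV, hdiam⟩ := mem_iInter.1 hyD n
      exact ⟨g ⁻¹' V, preimage_mem_comap hV,
        fun a ha b hb => (hdiam a ha b hb).trans hn⟩
    obtain ⟨z, hz⟩ := CompleteSpace.complete hcauchy
    exact ⟨z, tendsto_nhds_unique ((hg.continuous.tendsto z).mono_left hz) tendsto_comap⟩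

theorem IsGdeltaSigma.iUnion {Y : Type*} [TopologicalSpace Y] {s : ℕ → Set Y}
    (h : ∀ n, IsGdeltaSigma (s n)) : IsGdeltaSigma (⋃ n, s n) := by
  choose G hG hsG using h
  exact ⟨fun j => G j.unpair.1 j.unpair.2, fun j => hG _ _, by
    rw [iUnion_unpair]; exact iUnion_congr hsG⟩

theorem IsGδ.iUnion_inter_of_pairwise_disjoint {Y ι : Type*} [TopologicalSpace Y]
    {H O : ι → Set Y} (hH : ∀ i, IsGδ (H i)) (hO : ∀ i, IsOpen (O i))
    (hd : Pairwise (Disjoint on O)) : IsGδ (⋃ i, H i ∩ O i) := by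
  choose U hUo hHU using fun i => (hH i).eq_iInter_nat
  have hidx : ∀ {i j x}, x ∈ O i → x ∈ O j → i = j := fun hi hj =>
    by_contra fun hij => (hd hij).le_bot ⟨hi, hj⟩
  suffices ⋃ i, H i ∩ O i = ⋂ n, ⋃ i, U i n ∩ O i by
    rw [this]
    exact .iInter fun n => (isOpen_iUnion fun i => (hUo i n).inter (hO i)).isGδ
  refine subset_antisymm (fun x hx => ?_) fun x hx => ?_
  · obtain ⟨i, hxH, hxO⟩ := mem_iUnion.1 hx
    rw [hHU i] at hxH
    exact mem_iInter.2 fun n => mem_iUnion.2 ⟨i, mem_iInter.1 hxH n, hxO⟩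
  · obtain ⟨i, -, hxO⟩ := mem_iUnion.1 (mem_iInter.1 hx 0)
    refine mem_iUnion.2 ⟨i, ?_, hxO⟩
    rw [hHU i]
    refine mem_iInter.2 fun n => ?_
    obtain ⟨j, hxU, hxO'⟩ := mem_iUnion.1 (mem_iInter.1 hx n)
    exact hidx hxO' hxO ▸ hxU

theorem IsGdeltaSigma.iUnion_inter_of_pairwise_disjoint {Y ι : Type*} [TopologicalSpace Y]
    {s O : ι → Set Y} (hs : ∀ i, IsGdeltaSigma (s i)) (hO : ∀ i, IsOpen (O i))
    (hd : Pairwise (Disjoint on O)) : IsGdeltaSigma (⋃ i, s i ∩ O i) := by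
  choose G hG hsG using hs
  refine ⟨fun n => ⋃ i, G i n ∩ O i,
    fun n => .iUnion_inter_of_pairwise_disjoint (fun i => hG i n) hO hd, ?_⟩
  simp only [hsG, iUnion_inter]
  exact iUnion_comm _

open UniformSpace in
theorem absGdeltaSigma_iff_isGdeltaSigma_image_completion {X : Type u} [MetricSpace X]
    (B : Set X) : AbsGdeltaSigma B ↔ IsGdeltaSigma ((↑) '' B : Set (Completion X)) := by
  set e : B → Completion X := (↑) ∘ Subtype.val
  have he : IsEmbedding e := Completion.coe_isometry.isEmbedding.comp .subtypeVal
  have hrange : range e = (↑) '' B := by rw [range_comp, Subtype.range_coe]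
  refine ⟨fun h => hrange ▸ h.2 _ e he,
    fun ⟨G, hG, hBG⟩ => ⟨inferInstance, fun Y _ _ f hf => ?_⟩⟩
  have hGe : ∀ n, G n ⊆ range e := fun n => hrange ▸ hBG ▸ subset_iUnion G n
  have hD : ∀ n, IsCompletelyMetrizableSpace (e ⁻¹' G n) := fun n =>
    have := (hG n).isCompletelyMetrizableSpace
    (he.homeomorphOfSubsetRange (hGe n)).isClosedEmbedding.IsCompletelyMetrizableSpace
  refine ⟨fun n => f '' (e ⁻¹' G n), fun n => ?_, ?_⟩
  · dsimp only
    rw [← Subtype.range_coe (s := e ⁻¹' G n), ← range_comp]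
    exact (hf.comp .subtypeVal).isGδ_range
  · rw [← image_iUnion, ← preimage_iUnion, ← hBG, ← hrange, preimage_range, image_univ]

theorem absGdeltaSigma_iUnion {X : Type u} [MetricSpace X] {B : ℕ → Set X}
    (h : ∀ n, AbsGdeltaSigma (B n)) : AbsGdeltaSigma ↥(⋃ n, B n) := by
  simp only [absGdeltaSigma_iff_isGdeltaSigma_image_completion, image_iUnion] at h ⊢
  exact .iUnion h

open UniformSpace in
theorem absGdeltaSigma_iUnion_inter {X : Type u} [MetricSpace X] {ι : Type*} {B V : ι → Set X}
    (h : ∀ i, AbsGdeltaSigma (B i)) (hV : ∀ i, IsOpen (V i)) (hd : Pairwise (Disjoint on V)) :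
    AbsGdeltaSigma ↥(⋃ i, B i ∩ V i) := by
  simp only [absGdeltaSigma_iff_isGdeltaSigma_image_completion] at h ⊢
  choose O hO hOV using fun i => Completion.coe_isometry.isEmbedding.isOpen_iff.1 (hV i)
  -- disjoint because `X` is dense in its completion
  have hOd : Pairwise (Disjoint on O) := fun i j hij => by
    rw [onFun, disjoint_iff_inter_eq_empty, ← not_nonempty_iff_eq_empty]
    intro hne
    obtain ⟨x, hxi, hxj⟩ := Completion.denseRange_coe.exists_mem_open ((hO i).inter (hO j)) hne
    rw [← mem_preimage, hOV] at hxi hxj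
    exact (hd hij).le_bot ⟨hxi, hxj⟩
  simp only [← hOV, image_iUnion, image_inter_preimage]
  exact .iUnion_inter_of_pairwise_disjoint h hO hOd

theorem AbsGdeltaSigma.of_homeomorph {Z W : Type u} [TopologicalSpace Z] [TopologicalSpace W]
    (e : Z ≃ₜ W) (h : AbsGdeltaSigma Z) : AbsGdeltaSigma W :=
  have := h.1
  ⟨e.symm.isEmbedding.metrizableSpace, fun Y _ _ f hf => by
    simpa only [EquivLike.range_comp] using h.2 Y (f ∘ e) (hf.comp e.isEmbedding)⟩

section Weight

variable {X Z W : Type u} [TopologicalSpace X] [TopologicalSpace Z] [TopologicalSpace W]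
  {k : Cardinal.{u}}

theorem WeightLT.of_isInducing {e : Z → W} (he : IsInducing e) (h : WeightLT W k) :
    WeightLT Z k :=
  let ⟨B, hB, hcard⟩ := h
  ⟨preimage e '' B, hB.isInducing he, Cardinal.mk_image_le.trans_lt hcard⟩

theorem WeightLT.mono {s t : Set X} (hst : s ⊆ t) (h : WeightLT t k) : WeightLT s k :=
  h.of_isInducing (IsEmbedding.inclusion hst).isInducing

theorem weightLT_congr (e : Z ≃ₜ W) : WeightLT Z k ↔ WeightLT W k :=
  ⟨.of_isInducing e.symm.isInducing, .of_isInducing e.isInducing⟩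

theorem locallyWeightLT_subtype_iff {T : Set X} :
    LocallyWeightLT T k ↔ ∀ x ∈ T, ∃ u ∈ 𝓝 x, WeightLT ↥(T ∩ u) k := by
  have hweight (u : Set X) :
      WeightLT ↥((↑) ⁻¹' u : Set T) k ↔ WeightLT ↥(T ∩ u) k := by
    rw [← Subtype.image_preimage_coe]
    exact weightLT_congr (IsEmbedding.subtypeVal.homeomorphImage _)
  refine ⟨fun h x hx => ?_, fun h x => ?_⟩
  · obtain ⟨s, hs, hws⟩ := h ⟨x, hx⟩
    obtain ⟨u, hu, hus⟩ := (mem_nhds_subtype _ _ _).1 hs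
    exact ⟨u, hu, (hweight u).1 (hws.mono hus)⟩
  · obtain ⟨u, hu, hwu⟩ := h x x.2
    exact ⟨_, continuous_subtype_val.continuousAt.preimage_mem_nhds hu, (hweight u).2 hwu⟩

theorem locallyWeightLT_iUnion_inter {ι : Type*} {S V : ι → Set X}
    (h : ∀ i, LocallyWeightLT (S i) k) (hV : ∀ i, IsOpen (V i))
    (hd : Pairwise (Disjoint on V)) : LocallyWeightLT ↥(⋃ i, S i ∩ V i) k := by
  simp only [locallyWeightLT_subtype_iff] at h ⊢
  intro x hx
  obtain ⟨i, hxS, hxV⟩ := mem_iUnion.1 hx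
  obtain ⟨u, hu, hwu⟩ := h i x hxS
  refine ⟨u ∩ V i, inter_mem hu ((hV i).mem_nhds hxV), hwu.mono ?_⟩
  rintro y ⟨hy, hyu, hyV⟩
  obtain ⟨j, hyS, hyV'⟩ := mem_iUnion.1 hy
  obtain rfl : j = i := by_contra fun hji => (hd hji).le_bot ⟨hyV', hyV⟩
  exact ⟨hyS, hyu⟩

theorem LocallyWeightLT.of_homeomorph (e : Z ≃ₜ W) (h : LocallyWeightLT Z k) :
    LocallyWeightLT W k := fun w => by
  obtain ⟨v, hv, hwv⟩ := h (e.symm w)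
  refine ⟨e '' v, ?_, (weightLT_congr (e.isEmbedding.homeomorphImage v)).1 hwv⟩
  simpa using e.isOpenMap.image_mem_nhds hv

theorem Topology.IsEmbedding.sigmaLW_iff {e : Z → W} (he : IsEmbedding e) :
    SigmaLW Z k ↔
      ∃ S : ℕ → Set W, ⋃ n, S n = range e ∧ ∀ n, LocallyWeightLT (S n) k := by
  refine ⟨fun ⟨S, hS, hL⟩ => ⟨fun n => e '' S n, ?_, fun n => ?_⟩,
    fun ⟨S, hS, hL⟩ => ⟨fun n => e ⁻¹' S n, ?_, fun n => ?_⟩⟩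
  · rw [← image_iUnion, hS, image_univ]
  · exact (hL n).of_homeomorph (he.homeomorphImage (S n))
  · rw [← preimage_iUnion, hS, preimage_range]
  · exact (hL n).of_homeomorph (he.homeomorphOfSubsetRange (hS ▸ subset_iUnion S n)).symm

theorem SigmaLW.of_homeomorph (e : Z ≃ₜ W) (h : SigmaLW Z k) : SigmaLW W k :=
  let ⟨S, hS, hL⟩ := e.isEmbedding.sigmaLW_iff.1 h
  ⟨S, hS.trans e.surjective.range_eq, hL⟩

theorem sigmaLW_subtype_iff {A : Set X} :
    SigmaLW A k ↔ ∃ S : ℕ → Set X, ⋃ n, S n = A ∧ ∀ n, LocallyWeightLT (S n) k := by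
  simpa using IsEmbedding.subtypeVal.sigmaLW_iff (e := ((↑) : A → X))

theorem sigmaLW_iUnion {A : ℕ → Set X} (h : ∀ n, SigmaLW (A n) k) :
    SigmaLW ↥(⋃ n, A n) k := by
  simp only [sigmaLW_subtype_iff] at h ⊢
  choose S hS hL using h
  exact ⟨fun j => S j.unpair.1 j.unpair.2, by rw [iUnion_unpair]; exact iUnion_congr hS,
    fun j => hL _ _⟩

theorem sigmaLW_iUnion_inter {ι : Type*} {A V : ι → Set X} (h : ∀ i, SigmaLW (A i) k)
    (hV : ∀ i, IsOpen (V i)) (hd : Pairwise (Disjoint on V)) :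
    SigmaLW ↥(⋃ i, A i ∩ V i) k := by
  simp only [sigmaLW_subtype_iff] at h ⊢
  choose S hS hL using h
  refine ⟨fun n => ⋃ i, S i n ∩ V i, ?_,
    fun n => locallyWeightLT_iUnion_inter (fun i => hL i n) hV hd⟩
  simp only [← hS, iUnion_inter]
  exact iUnion_comm _

end Weight

theorem slwPlusGDS_subtype_iff {X : Type u} [TopologicalSpace X] {k : Cardinal.{u}} {s : Set X} :
    SLWplusGDS s k ↔ ∃ A B : Set X, A ∪ B = s ∧ SigmaLW A k ∧ AbsGdeltaSigma B := by
  refine ⟨fun ⟨A, B, hAB, hA, hB⟩ => ⟨(↑) '' A, (↑) '' B, ?_,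
      hA.of_homeomorph (IsEmbedding.subtypeVal.homeomorphImage A),
      hB.of_homeomorph (IsEmbedding.subtypeVal.homeomorphImage B)⟩,
    fun ⟨A, B, hAB, hA, hB⟩ => ⟨(↑) ⁻¹' A, (↑) ⁻¹' B, ?_,
      hA.of_homeomorph (IsEmbedding.subtypeVal.homeomorphOfSubsetRange ?_).symm,
      hB.of_homeomorph (IsEmbedding.subtypeVal.homeomorphOfSubsetRange ?_).symm⟩⟩
  · rw [← image_union, hAB, image_univ, Subtype.range_coe]
  · rw [← preimage_union, hAB, Subtype.coe_preimage_self]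
  · exact Subtype.range_coe.symm ▸ hAB ▸ subset_union_left
  · exact Subtype.range_coe.symm ▸ hAB ▸ subset_union_right

section SLWplusGDS

variable {X : Type u} [MetricSpace X] {k : Cardinal.{u}}

theorem slwPlusGDS_of_iUnion_eq_univ {s : ℕ → Set X} (h : ∀ n, SLWplusGDS (s n) k)
    (hs : ⋃ n, s n = univ) : SLWplusGDS X k := by
  simp only [slwPlusGDS_subtype_iff] at h
  choose A B hAB hA hB using h
  refine ⟨⋃ n, A n, ⋃ n, B n, ?_, sigmaLW_iUnion hA, absGdeltaSigma_iUnion hB⟩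
  rw [← iUnion_union_distrib, iUnion_congr hAB, hs]

theorem slwPlusGDS_iUnion_inter {ι : Type*} {s V : ι → Set X} (h : ∀ i, SLWplusGDS (s i) k)
    (hV : ∀ i, IsOpen (V i)) (hd : Pairwise (Disjoint on V)) :
    SLWplusGDS ↥(⋃ i, s i ∩ V i) k := by
  simp only [slwPlusGDS_subtype_iff] at h ⊢
  choose A B hAB hA hB using h
  refine ⟨⋃ i, A i ∩ V i, ⋃ i, B i ∩ V i, ?_, sigmaLW_iUnion_inter hA hV hd,
    absGdeltaSigma_iUnion_inter hB hV hd⟩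
  simp only [← iUnion_union_distrib, ← union_inter_distrib_right, hAB]

end SLWplusGDS

theorem exists_pairwise_disjoint_open_refinement {X ι : Type*} [PseudoMetricSpace X]
    {o : ι → Set X} (ho : ∀ i, IsOpen (o i)) (hcov : ⋃ i, o i = univ) :
    ∃ E : ℕ → ι → Set X, (∀ n i, IsOpen (E n i)) ∧ (∀ n i, E n i ⊆ o i) ∧
      (∀ n, Pairwise (Disjoint on E n)) ∧ ⋃ n, ⋃ i, E n i = univ := by
  obtain ⟨_, hwf⟩ := exists_wellFoundedLT ι
  -- Stone's construction: centres in `C n i` and `C n j` with `j < i` are `2/(n+1)`-apart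
  let C : ℕ → ι → Set X := fun n i =>
    {y | Metric.ball y (2 / (n + 1)) ⊆ o i ∧ ∀ j < i, y ∉ o j}
  let E : ℕ → ι → Set X := fun n i => ⋃ y ∈ C n i, Metric.ball y (1 / (n + 1))
  refine ⟨E, fun n i => isOpen_biUnion fun _ _ => Metric.isOpen_ball, fun n i => ?_,
    fun n i j hij => ?_, ?_⟩
  · refine iUnion₂_subset fun y hy => (Metric.ball_subset_ball ?_).trans hy.1
    gcongr; norm_num
  · refine disjoint_left.2 fun z hzi hzj => ?_
    obtain ⟨y, hy, hzy⟩ := mem_iUnion₂.1 hzi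
    obtain ⟨y', hy', hzy'⟩ := mem_iUnion₂.1 hzj
    have hyy' : dist y' y < 2 / (n + 1) := by
      calc dist y' y ≤ dist z y' + dist z y := dist_triangle_left _ _ _
        _ < 1 / (n + 1) + 1 / (n + 1) := add_lt_add hzy' hzy
        _ = 2 / (n + 1) := by ring
    rcases lt_or_gt_of_ne hij with h | h
    · exact hy'.2 i h (hy.1 hyy')
    · exact hy.2 j h (hy'.1 (by rwa [Metric.mem_ball, dist_comm]))
  · refine eq_univ_of_forall fun x => ?_
    obtain ⟨i, hxi, hmin⟩ := wellFounded_lt.has_min {i | x ∈ o i}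
      (mem_iUnion.1 (hcov ▸ mem_univ x))
    obtain ⟨ε, hε, hball⟩ := Metric.isOpen_iff.1 (ho i) x hxi
    obtain ⟨n, hn⟩ := exists_nat_one_div_lt (half_pos hε)
    have hr : 2 / ((n : ℝ) + 1) ≤ ε := by
      rw [show 2 / ((n : ℝ) + 1) = 2 * (1 / (n + 1)) by ring]; linarith
    have hxC : x ∈ C n i := ⟨(Metric.ball_subset_ball hr).trans hball,
      fun j hj hxj => hmin j hxj hj⟩
    exact mem_iUnion.2 ⟨n, mem_iUnion.2 ⟨i, mem_iUnion₂.2 ⟨x, hxC, Metric.mem_ball_self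
      Nat.one_div_pos_of_nat⟩⟩⟩

theorem slwPlusGDS_of_locally {X : Type u} [MetricSpace X] {k : Cardinal.{u}}
    (h : ∀ x : X, ∃ s ∈ 𝓝 x, SLWplusGDS s k) : SLWplusGDS X k := by
  choose s hs hsk using h
  obtain ⟨E, hEo, hEs, hEd, hE⟩ := exists_pairwise_disjoint_open_refinement
    (fun x => isOpen_interior (s := s x))
    (eq_univ_of_forall fun x => mem_iUnion.2 ⟨x, mem_interior_iff_mem_nhds.2 (hs x)⟩)
  refine slwPlusGDS_of_iUnion_eq_univ (fun n => slwPlusGDS_iUnion_inter hsk (hEo n) (hEd n)) ?_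
  rw [← hE]
  exact iUnion_congr fun n => iUnion_congr fun x =>
    inter_eq_right.2 ((hEs n x).trans interior_subset)

theorem stmt_0_general (k : Cardinal.{u})
    (X : Type u) [TopologicalSpace X] [TopologicalSpace.MetrizableSpace X] :
    ((∀ x : X, ∃ s : Set X, s ∈ nhds x ∧ SLWplusGDS ↥s k) → SLWplusGDS X k) ∧
    (∀ S : ℕ → Set X, (⋃ n, S n) = Set.univ → (∀ n, SLWplusGDS ↥(S n) k) →
      SLWplusGDS X k) := by
  let := metrizableSpaceMetric X
  exact ⟨slwPlusGDS_of_locally, fun S hS h => slwPlusGDS_of_iUnion_eq_univ h hS⟩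

/-- (1) If a metrizable strongly zero-dimensional space `X` is locally
`σLW(<k) + 𝒢_δσ`, then `X ∈ σLW(<k) + 𝒢_δσ`.  (2) A countable union of subspaces in
`σLW(<k) + 𝒢_δσ` is in `σLW(<k) + 𝒢_δσ`. -/
theorem stmt_0 (k : Cardinal.{u}) (hk : Cardinal.aleph0 ≤ k)
    (X : Type u) [TopologicalSpace X] [TopologicalSpace.MetrizableSpace X]
    (hX : StronglyZeroDim X) :
    ((∀ x : X, ∃ s : Set X, s ∈ nhds x ∧ SLWplusGDS ↥s k) → SLWplusGDS X k) ∧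
    (∀ S : ℕ → Set X, (⋃ n, S n) = Set.univ → (∀ n, SLWplusGDS ↥(S n) k) →
      SLWplusGDS X k) :=
  stmt_0_general k X
end

section
/- Let A_i be a nowhere dense closed subset of an h-homogeneous metric space (X_i, ρ_i) for i ∈ {1, 2}, and let g : X₁ → X₂ be a homeomorphism such that g(A₁) = A₂. Then for every homeomorphism f₀ : A₁ → A₂ and every ε > 0 satisfying sup{ρ₂(g(a), f₀(a)) : a ∈ A₁} < ε, there exists a homeomorphism f : X₁ → X₂ such that f restricted to A₁ equals f₀ and sup{ρ₂(g(x), f(x)) : x ∈ X₁} < ε. -/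
open Topology Set Filter

universe u v

/-!
Transporting `f₀` along `g` turns it into a self-homeomorphism `φ` of `B = A₂` moving points by
at most `c < ε`, and it suffices to extend `φ` to a homeomorphism of `X₂` moving points by at most
`c + δ`. Take clopen neighbourhoods `C 0 ⊇ C 1 ⊇ ⋯` of `B` shrinking to `B`. Ring by ring, the
open set `C 0 \ B` is cut into small clopen pieces, and a piece near `a ∈ B` is mapped
homeomorphically onto a clopen set near `φ a` outside `B`: such copies exist because `B` is nowhere
dense and, by h-homogeneity, every nonempty clopen set contains a clopen copy of any clopen set.
Alternating between domains and images (back and forth) makes both sides exhaust `C 0 \ B`.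
Gluing the pieces with `φ` on `B` and the identity off `C 0` gives a bijection; it is continuous
at `B` because the pieces met near `B` are small and anchored near points of `B` where `φ` is
continuous, and the same argument applies to its inverse.
-/

open Function

section ZeroDim

variable {X : Type*} [TopologicalSpace X]

theorem StronglyZeroDim.exists_isClopen_between (hz : StronglyZeroDim X) {s u : Set X}
    (hs : IsClosed s) (hu : IsOpen u) (hsu : s ⊆ u) : ∃ t, IsClopen t ∧ s ⊆ t ∧ t ⊆ u := by
  obtain ⟨t, ht, hst, hd⟩ := hz s uᶜ hs hu.isClosed_compl (disjoint_compl_right.mono_left hsu)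
  exact ⟨t, ht, hst, fun x hx => by_contra fun hxu => hd.le_bot ⟨hxu, hx⟩⟩

theorem StronglyZeroDim.exists_locallyFinite_isClopen_refinement [ParacompactSpace X]
    [NormalSpace X] (hz : StronglyZeroDim X) {ι : Type*} {u : ι → Set X}
    (hu : ∀ i, IsOpen (u i)) (hcov : ⋃ i, u i = univ) :
    ∃ K : ι → Set X, (∀ i, IsClopen (K i)) ∧ LocallyFinite K ∧ (∀ i, K i ⊆ u i) ∧
      ⋃ i, K i = univ := by
  obtain ⟨v, hvo, hvcov, hvlf, hvu⟩ := precise_refinement u hu hcov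
  obtain ⟨w, hwcov, -, hwv⟩ :=
    exists_iUnion_eq_closure_subset hvo (fun x => hvlf.point_finite x) hvcov
  choose K hK hwK hKv using fun i => hz.exists_isClopen_between isClosed_closure (hvo i) (hwv i)
  refine ⟨K, hK, hvlf.subset hKv, fun i => (hKv i).trans (hvu i), ?_⟩
  exact univ_subset_iff.1 (hwcov ▸ iUnion_mono fun i => subset_closure.trans (hwK i))

theorem LocallyFinite.exists_pairwise_disjoint_isClopen {ι : Type*} {K : ι → Set X}
    (hK : ∀ i, IsClopen (K i)) (hlf : LocallyFinite K) :
    ∃ L : ι → Set X, (∀ i, IsClopen (L i)) ∧ Pairwise (Disjoint on L) ∧ (∀ i, L i ⊆ K i) ∧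
      ⋃ i, L i = ⋃ i, K i := by
  let r : ι → ι → Prop := WellOrderingRel
  have hbefore : ∀ i, IsClopen (⋃ j : {j // r j i}, K j) := fun i =>
    ⟨(hlf.comp_injective Subtype.val_injective).isClosed_iUnion fun j => (hK j).1,
      isOpen_iUnion fun j => (hK j).2⟩
  refine ⟨fun i => K i \ ⋃ j : {j // r j i}, K j, fun i => (hK i).diff (hbefore i), ?_,
    fun i => sdiff_subset, ?_⟩
  · intro i j hij
    refine disjoint_left.2 fun x hi hj => ?_
    rcases trichotomous_of r i j with h | h | h
    · exact hj.2 (mem_iUnion.2 ⟨⟨i, h⟩, hi.1⟩)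
    · exact hij h
    · exact hi.2 (mem_iUnion.2 ⟨⟨j, h⟩, hj.1⟩)
  · refine (iUnion_mono fun i => sdiff_subset).antisymm fun x hx => ?_
    have hne : {i | x ∈ K i}.Nonempty := mem_iUnion.1 hx
    have wf := WellOrderingRel.isWellOrder (α := ι) |>.wf
    refine mem_iUnion.2 ⟨wf.min _ hne, wf.min_mem _ hne, fun hx' => ?_⟩
    obtain ⟨⟨j, hj⟩, hxj⟩ := mem_iUnion.1 hx'
    exact wf.not_lt_min _ hxj hj

theorem StronglyZeroDim.exists_pairwise_disjoint_isClopen_refinement [ParacompactSpace X]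
    [NormalSpace X] (hz : StronglyZeroDim X) {ι : Type*} {u : ι → Set X}
    (hu : ∀ i, IsOpen (u i)) (hcov : ⋃ i, u i = univ) :
    ∃ K : ι → Set X, (∀ i, IsClopen (K i)) ∧ Pairwise (Disjoint on K) ∧ (∀ i, K i ⊆ u i) ∧
      ⋃ i, K i = univ := by
  obtain ⟨K, hK, hlf, hKu, hKcov⟩ := hz.exists_locallyFinite_isClopen_refinement hu hcov
  obtain ⟨L, hL, hLd, hLK, hLcov⟩ := hlf.exists_pairwise_disjoint_isClopen hK
  exact ⟨L, hL, hLd, fun i => (hLK i).trans (hKu i), hLcov.trans hKcov⟩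

theorem isClosed_biUnion_of_pairwise_disjoint {ι : Type*} {w : ι → Set X}
    (hw : ∀ i, IsOpen (w i)) (hwd : Pairwise (Disjoint on w)) (hU : IsClosed (⋃ i, w i))
    (s : Set ι) : IsClosed (⋃ i ∈ s, w i) := by
  have : ⋃ i ∈ s, w i = (⋃ i, w i) \ ⋃ i ∈ sᶜ, w i := by
    ext x
    simp only [mem_iUnion, Set.mem_sdiff, mem_compl_iff, not_exists]
    refine ⟨fun ⟨i, hi, hx⟩ => ⟨⟨i, hx⟩, fun j hj hxj => ?_⟩, fun ⟨⟨i, hx⟩, h⟩ => ?_⟩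
    · exact (hwd (ne_of_mem_of_not_mem hi hj)).le_bot ⟨hx, hxj⟩
    · exact ⟨i, by_contra fun hi => h i hi hx, hx⟩
  rw [this]
  exact hU.sdiff (isOpen_biUnion fun i _ => hw i)

theorem isClopen_iUnion_of_subset_partition {ι : Type*} {Q S : ι → Set X}
    (hQ : ∀ i, IsOpen (Q i)) (hQd : Pairwise (Disjoint on Q)) (hQcov : ⋃ i, Q i = univ)
    (hS : ∀ i, IsClopen (S i)) (hSQ : ∀ i, S i ⊆ Q i) : IsClopen (⋃ i, S i) := by
  refine ⟨⟨?_⟩, isOpen_iUnion fun i => (hS i).2⟩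
  have : (⋃ i, S i)ᶜ = ⋃ i, Q i \ S i := by
    ext x
    simp only [mem_compl_iff, mem_iUnion, not_exists, Set.mem_sdiff]
    refine ⟨fun h => ?_, fun ⟨i, hxQ, hxS⟩ j hxj => ?_⟩
    · obtain ⟨i, hi⟩ := mem_iUnion.1 (hQcov.symm ▸ mem_univ x : x ∈ ⋃ i, Q i)
      exact ⟨i, hi, h i⟩
    · obtain rfl : i = j := by_contra fun hij => (hQd hij).le_bot ⟨hxQ, hSQ j hxj⟩
      exact hxS hxj
  rw [this]
  exact isOpen_iUnion fun i => (hQ i).sdiff (hS i).1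

theorem isClopen_iUnion_of_isClopen_fibers {ι κ : Type*} {Q : κ → Set X}
    (hQ : ∀ z, IsOpen (Q z)) (hQd : Pairwise (Disjoint on Q)) (hQcov : ⋃ z, Q z = univ)
    {k : ι → κ} {v : ι → Set X} (hvQ : ∀ i, v i ⊆ Q (k i))
    (hv : ∀ z, IsClopen (⋃ i ∈ k ⁻¹' {z}, v i)) : IsClopen (⋃ i, v i) := by
  have : ⋃ i, v i = ⋃ z, ⋃ i ∈ k ⁻¹' {z}, v i := by
    ext x
    simp only [mem_iUnion, mem_preimage, mem_singleton_iff, exists_prop]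
    exact ⟨fun ⟨i, hx⟩ => ⟨k i, i, rfl, hx⟩, fun ⟨_, i, _, hx⟩ => ⟨i, hx⟩⟩
  rw [this]
  exact isClopen_iUnion_of_subset_partition hQ hQd hQcov hv
    fun z => iUnion₂_subset fun i hi => (hi : k i = z) ▸ hvQ i

theorem HHomogeneous.exists_isClopenEmbedding_subset [T1Space X] (hz : StronglyZeroDim X)
    (hh : HHomogeneous X) {U : Set X} (hU : IsOpen U) (hne : U.Nonempty) :
    ∃ F : X → X, IsClosedEmbedding F ∧ IsOpenMap F ∧ range F ⊆ U := by
  obtain ⟨y, hy⟩ := hne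
  obtain ⟨W, hW, hyW, hWU⟩ :=
    hz.exists_isClopen_between isClosed_singleton hU (singleton_subset_iff.2 hy)
  obtain ⟨e⟩ := hh W hW ⟨y, hyW rfl⟩
  refine ⟨Subtype.val ∘ e.symm, hW.1.isClosedEmbedding_subtypeVal.comp e.symm.isClosedEmbedding,
    hW.2.isOpenEmbedding_subtypeVal.isOpenMap.comp e.symm.isOpenMap, ?_⟩
  exact (range_comp_subset_range _ _).trans (by simpa using hWU)

end ZeroDim

section Metric

variable {X : Type*} [MetricSpace X]

open Metric

theorem StronglyZeroDim.exists_isClopen_partition_ball (hz : StronglyZeroDim X) {E : Set X}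
    (hE : IsClopen E) {r : ℝ} (hr : 0 < r) :
    ∃ w : E → Set X, (∀ i, IsClopen (w i)) ∧ Pairwise (Disjoint on w) ∧ ⋃ i, w i = E ∧
      ∀ i, w i ⊆ ball (i : X) r := by
  classical
  let u : X → Set X := fun x => if x ∈ E then ball x r else Eᶜ
  have hu : ∀ x, IsOpen (u x) := fun x => by
    by_cases hx : x ∈ E <;> simp [u, hx, isOpen_ball, hE.1.isOpen_compl]
  have hcov : ⋃ x, u x = univ := eq_univ_of_forall fun x => mem_iUnion.2 ⟨x, by
    by_cases hx : x ∈ E <;> simp [u, hx, hr]⟩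
  obtain ⟨K, hK, hKd, hKu, hKcov⟩ := hz.exists_pairwise_disjoint_isClopen_refinement hu hcov
  refine ⟨fun i => K i ∩ E, fun i => (hK i).inter hE,
    fun i j hij => (hKd (Subtype.val_injective.ne hij)).mono inter_subset_left inter_subset_left,
    ?_, fun i => inter_subset_left.trans <| by simpa [u, i.2] using hKu i⟩
  refine (iUnion_subset fun i => inter_subset_right).antisymm fun x hx => ?_
  obtain ⟨y, hy⟩ := mem_iUnion.1 (hKcov.symm ▸ mem_univ x : x ∈ ⋃ y, K y)
  have hyE : y ∈ E := by_contra fun hyE => by simpa [u, hyE, hx] using hKu y hy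
  exact mem_iUnion.2 ⟨⟨y, hyE⟩, hy, hx⟩

theorem StronglyZeroDim.exists_antitone_isClopen_subset_thickening (hz : StronglyZeroDim X)
    {B : Set X} (hB : IsClosed B) {s : ℕ → ℝ} (hs : ∀ n, 0 < s n) :
    ∃ C : ℕ → Set X, Antitone C ∧ ∀ n, IsClopen (C n) ∧ B ⊆ C n ∧ C n ⊆ thickening (s n) B := by
  choose D hD hBD hDs using fun n =>
    hz.exists_isClopen_between hB isOpen_thickening (self_subset_thickening (hs n) B)
  refine ⟨fun n => ⋂ k ∈ Finset.range (n + 1), D k, fun m n hmn => ?_, fun n => ⟨?_, ?_, ?_⟩⟩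
  · exact biInter_subset_biInter_left fun k hk => by
      simp only [Finset.coe_range, mem_Iio] at hk ⊢; omega
  · exact isClopen_biInter_finset fun k _ => hD k
  · exact subset_iInter₂ fun k _ => hBD k
  · exact (biInter_subset_of_mem (by simp)).trans (hDs n)

theorem HHomogeneous.exists_isClopen_copies_near (hz : StronglyZeroDim X) (hh : HHomogeneous X)
    {K : Set X} (hK : IsClosed K) {ι : Type*} {w : ι → Set X} (hw : ∀ i, IsClopen (w i))
    (hwd : Pairwise (Disjoint on w)) (hwU : IsClosed (⋃ i, w i)) {y : ι → X}
    (hy : ∀ i, y i ∈ closure Kᶜ) {t : ℝ} (ht : 0 < t) :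
    ∃ (v : ι → Set X) (_ : ∀ i, w i ≃ₜ v i),
      (∀ i, IsClopen (v i) ∧ v i ⊆ ball (y i) (2 * t) ∧ Disjoint (v i) K) ∧
      Pairwise (Disjoint on v) ∧ IsClopen (⋃ i, v i) := by
  classical
  obtain ⟨Q, hQ, hQd, hQball, hQcov⟩ := hz.exists_pairwise_disjoint_isClopen_refinement
    (u := fun z : X => ball z t) (fun _ => isOpen_ball)
    (iUnion_eq_univ_iff.2 fun x => ⟨x, mem_ball_self ht⟩)
  choose k hk using fun i => mem_iUnion.1 (hQcov.symm ▸ mem_univ (y i) : y i ∈ ⋃ z, Q z)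
  have hF : ∀ z, ∃ F : X → X, (Q z \ K).Nonempty →
      IsClosedEmbedding F ∧ IsOpenMap F ∧ range F ⊆ Q z \ K := fun z => by
    by_cases hne : (Q z \ K).Nonempty
    · obtain ⟨F, hF⟩ := hh.exists_isClopenEmbedding_subset hz ((hQ z).2.sdiff hK) hne
      exact ⟨F, fun _ => hF⟩
    · exact ⟨id, fun h => absurd h hne⟩
  choose F hF using hF
  -- each `Q (k i)` is a neighbourhood of `y i ∈ closure Kᶜ`, so it has room outside `K`
  have hG : ∀ i, IsClosedEmbedding (F (k i)) ∧ IsOpenMap (F (k i)) ∧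
      range (F (k i)) ⊆ Q (k i) \ K :=
    fun i => hF _ (mem_closure_iff.1 (hy i) _ (hQ (k i)).2 (hk i))
  have hvQ : ∀ i, F (k i) '' w i ⊆ Q (k i) \ K := fun i => (image_subset_range _ _).trans (hG i).2.2
  refine ⟨fun i => F (k i) '' w i, fun i => (hG i).1.isEmbedding.homeomorphImage (w i),
    fun i => ⟨⟨(hG i).1.isClosedMap _ (hw i).1, (hG i).2.1 _ (hw i).2⟩, fun x hx => ?_,
      disjoint_left.2 fun x hx => (hvQ i hx).2⟩, fun i j hij => ?_, ?_⟩
  · have h1 := hQball (k i) (hvQ i hx).1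
    have h2 := hQball (k i) (hk i)
    rw [mem_ball] at h1 h2 ⊢
    linarith [dist_triangle_right x (y i) (k i)]
  · by_cases hkk : k i = k j
    · simp only [onFun, hkk]
      exact (disjoint_image_iff (hG j).1.injective).2 (hwd hij)
    · exact (hQd hkk).mono (fun x hx => (hvQ i hx).1) fun x hx => (hvQ j hx).1
  · refine isClopen_iUnion_of_isClopen_fibers (fun z => (hQ z).2) hQd hQcov
      (fun i x hx => (hvQ i hx).1) fun z => ?_
    by_cases hz : ∃ i₀, k i₀ = z
    · obtain ⟨i₀, rfl⟩ := hz
      have : ⋃ i ∈ k ⁻¹' {k i₀}, F (k i) '' w i = F (k i₀) '' ⋃ i ∈ k ⁻¹' {k i₀}, w i := by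
        rw [image_iUnion₂]
        exact iUnion₂_congr fun i hi => by rw [show k i = k i₀ from hi]
      rw [this]
      exact ⟨(hG i₀).1.isClosedMap _ (isClosed_biUnion_of_pairwise_disjoint
        (fun i => (hw i).2) hwd hwU _), (hG i₀).2.1 _ (isOpen_biUnion fun i _ => (hw i).2)⟩
    · simp only [not_exists] at hz
      simp [hz, isClopen_empty]

theorem exists_notMem_of_subset_thickening {B : Set X} (hB : IsClosed B) {s : ℕ → ℝ}
    (hs0 : Tendsto s atTop (𝓝 0)) {C : ℕ → Set X} (hC : ∀ n, C n ⊆ thickening (s n) B)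
    {x : X} (hx : x ∉ B) : ∃ k, x ∉ C k := by
  have : x ∉ ⋂ (δ : ℝ) (_ : 0 < δ), thickening δ B := by
    rwa [← closure_eq_iInter_thickening, hB.closure_eq]
  simp only [mem_iInter, not_forall] at this
  obtain ⟨δ, hδ, hxδ⟩ := this
  obtain ⟨k, hk⟩ := (hs0.eventually (gt_mem_nhds hδ)).exists
  exact ⟨k, fun hxk => hxδ (thickening_mono hk.le B (hC k hxk))⟩

end Metric

theorem continuousAt_of_eventually_exists_near {X Y : Type*} [MetricSpace X] [MetricSpace Y]
    {B : Set X} {φ : B → Y} (hφ : Continuous φ) {F : X → Y} {b : B} (hFb : F b = φ b)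
    (h : ∀ δ > 0, ∀ᶠ x in 𝓝 (b : X), ∃ a : B, dist x (a : X) < δ ∧ dist (F x) (φ a) < δ) :
    ContinuousAt F b := by
  refine Metric.tendsto_nhds.2 fun ε hε => ?_
  obtain ⟨θ, hθ, hφθ⟩ := Metric.continuousAt_iff.1 hφ.continuousAt (ε / 2) (half_pos hε)
  filter_upwards [h (min (θ / 2) (ε / 2)) (by positivity), Metric.ball_mem_nhds _ (half_pos hθ)]
    with x ⟨a, hxa, hFa⟩ hxb
  have hab : dist (φ a) (φ b) < ε / 2 := hφθ <| by
    rw [Subtype.dist_eq]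
    linarith [dist_triangle_left (a : X) b x, min_le_left (θ / 2) (ε / 2), Metric.mem_ball.1 hxb]
  rw [hFb]
  linarith [dist_triangle (F x) (φ a) (φ b), min_le_right (θ / 2) (ε / 2)]

section Pieces

variable {X : Type*} [MetricSpace X] {B : Set X}

open Metric

/-- A block `dom ≃ₜ cod` of the homeomorphism under construction, with anchor points `src`, `tgt`
in `B` for its two sides and a scale `radius`, related by `IsAnchored`. -/
structure Piece (B : Set X) where
  dom : Set X
  cod : Set X
  homeo : dom ≃ₜ cod
  src : B
  tgt : B
  radius : ℝ

namespace Piece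

def symm (p : Piece B) : Piece B := ⟨p.cod, p.dom, p.homeo.symm, p.tgt, p.src, p.radius⟩

@[simp]
theorem symm_symm (p : Piece B) : p.symm.symm = p := rfl

theorem symm_injective : Function.Injective (symm : Piece B → Piece B) :=
  Function.LeftInverse.injective symm_symm

@[simp]
theorem image_symm_image_symm (P : Set (Piece B)) : symm '' (symm '' P) = P := by
  simp [image_image]

def IsAnchored (φ : B ≃ₜ B) (p : Piece B) : Prop :=
  p.tgt = φ p.src ∧ p.dom ⊆ ball (p.src : X) p.radius ∧ p.cod ⊆ ball (p.tgt : X) p.radius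

theorem IsAnchored.symm {φ : B ≃ₜ B} {p : Piece B} (h : p.IsAnchored φ) :
    p.symm.IsAnchored φ.symm :=
  ⟨φ.eq_symm_apply.2 h.1.symm, h.2.2, h.2.1⟩

def doms (P : Set (Piece B)) : Set X := ⋃ p ∈ P, p.dom

def cods (P : Set (Piece B)) : Set X := ⋃ p ∈ P, p.cod

@[simp]
theorem doms_image_symm (P : Set (Piece B)) : doms (symm '' P) = cods P := by
  simp [doms, cods, biUnion_image, symm]

@[simp]
theorem cods_image_symm (P : Set (Piece B)) : cods (symm '' P) = doms P := by
  simp [doms, cods, biUnion_image, symm]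

structure IsMatching (φ : B ≃ₜ B) (P : Set (Piece B)) : Prop where
  anchored : ∀ p ∈ P, p.IsAnchored φ
  isOpen_dom : ∀ p ∈ P, IsOpen p.dom
  isOpen_cod : ∀ p ∈ P, IsOpen p.cod
  pairwise_dom : P.Pairwise (Disjoint on dom)
  pairwise_cod : P.Pairwise (Disjoint on cod)

theorem IsMatching.image_symm {φ : B ≃ₜ B} {P : Set (Piece B)} (hP : IsMatching φ P) :
    IsMatching φ.symm (symm '' P) where
  anchored := forall_mem_image.2 fun p hp => (hP.anchored p hp).symm
  isOpen_dom := forall_mem_image.2 hP.isOpen_cod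
  isOpen_cod := forall_mem_image.2 hP.isOpen_dom
  pairwise_dom := (symm_injective.injOn (s := P)).pairwise_image.2 hP.pairwise_cod
  pairwise_cod := (symm_injective.injOn (s := P)).pairwise_image.2 hP.pairwise_dom

def ShrinksTo (B : Set X) (P : Set (Piece B)) : Prop :=
  ∀ b ∈ B, ∀ δ > 0, ∀ᶠ x in 𝓝 b, ∀ p ∈ P, x ∈ p.dom ∪ p.cod → p.radius < δ

theorem ShrinksTo.image_symm {P : Set (Piece B)} (h : ShrinksTo B P) : ShrinksTo B (symm '' P) :=
  fun b hb δ hδ => (h b hb δ hδ).mono fun _ hx => forall_mem_image.2 fun p hp hxp =>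
    hx p hp (union_comm p.dom p.cod ▸ hxp)

open Classical in
noncomputable def glue (P : Set (Piece B)) (φ : B ≃ₜ B) (x : X) : X :=
  if h : ∃ p ∈ P, x ∈ p.dom then (h.choose.homeo ⟨x, h.choose_spec.2⟩ : X)
  else if hx : x ∈ B then (φ ⟨x, hx⟩ : X) else x

variable {φ : B ≃ₜ B} {P : Set (Piece B)}

theorem glue_of_mem_dom (hP : P.Pairwise (Disjoint on dom)) {p : Piece B} (hp : p ∈ P)
    {x : X} (hx : x ∈ p.dom) : glue P φ x = p.homeo ⟨x, hx⟩ := by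
  have h : ∃ p ∈ P, x ∈ p.dom := ⟨p, hp, hx⟩
  have hchoose : h.choose = p :=
    by_contra fun hne => (hP h.choose_spec.1 hp hne).le_bot ⟨h.choose_spec.2, hx⟩
  rw [glue, dif_pos h]
  subst hchoose
  rfl

theorem glue_of_mem (hx : x ∈ B) (hxP : x ∉ doms P) : glue P φ x = φ ⟨x, hx⟩ := by
  have h : ¬∃ p ∈ P, x ∈ p.dom := by simpa [doms] using hxP
  rw [glue, dif_neg h, dif_pos hx]

theorem glue_of_not_mem (hx : x ∉ B) (hxP : x ∉ doms P) : glue P φ x = x := by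
  have h : ¬∃ p ∈ P, x ∈ p.dom := by simpa [doms] using hxP
  rw [glue, dif_neg h, dif_neg hx]

theorem glue_mem_cod (hP : P.Pairwise (Disjoint on dom)) {p : Piece B} (hp : p ∈ P)
    {x : X} (hx : x ∈ p.dom) : glue P φ x ∈ p.cod := by
  rw [glue_of_mem_dom hP hp hx]
  exact Subtype.coe_prop _

theorem glue_symm_glue (hP : IsMatching φ P) (hcods : cods P = doms P)
    (hB : Disjoint (doms P) B) (x : X) : glue (symm '' P) φ.symm (glue P φ x) = x := by
  have hP' := hP.image_symm
  by_cases hxP : x ∈ doms P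
  · obtain ⟨p, hp, hx⟩ := mem_iUnion₂.1 hxP
    have hmem := glue_mem_cod (φ := φ) hP.pairwise_dom hp hx
    have hF : (⟨glue P φ x, hmem⟩ : p.cod) = p.homeo ⟨x, hx⟩ :=
      Subtype.ext (glue_of_mem_dom hP.pairwise_dom hp hx)
    rw [glue_of_mem_dom hP'.pairwise_dom (p := p.symm) (mem_image_of_mem symm hp) hmem]
    change ((p.homeo.symm ⟨glue P φ x, hmem⟩ : p.dom) : X) = x
    rw [hF, Homeomorph.symm_apply_apply]
  by_cases hxB : x ∈ B
  · have hφx : (φ ⟨x, hxB⟩ : X) ∉ cods P := fun h =>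
      hB.le_bot ⟨hcods ▸ h, (φ ⟨x, hxB⟩).2⟩
    rw [glue_of_mem hxB hxP, glue_of_mem (φ ⟨x, hxB⟩).2 (by simpa using hφx)]
    simp
  · rw [glue_of_not_mem hxB hxP, glue_of_not_mem hxB (by simpa [hcods] using hxP)]

theorem continuous_glue (hP : IsMatching φ P) {C : Set X} (hC : IsClopen C) (hBC : B ⊆ C)
    (hdoms : doms P = C \ B) (hshr : ShrinksTo B P) : Continuous (glue P φ) := by
  refine continuous_iff_continuousAt.2 fun x => ?_
  by_cases hxB : x ∈ B
  · have hφ : Continuous fun b : B => (φ b : X) := continuous_subtype_val.comp φ.continuous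
    have hxP : x ∉ doms P := fun h => (hdoms ▸ h).2 hxB
    refine continuousAt_of_eventually_exists_near hφ (b := ⟨x, hxB⟩) (glue_of_mem hxB hxP)
      fun δ hδ => ?_
    filter_upwards [hshr x hxB δ hδ, hC.2.mem_nhds (hBC hxB)] with y hy hyC
    by_cases hyB : y ∈ B
    · refine ⟨⟨y, hyB⟩, by simpa using hδ, ?_⟩
      rw [glue_of_mem hyB fun h => (hdoms ▸ h).2 hyB]
      simpa using hδ
    obtain ⟨p, hp, hyp⟩ := mem_iUnion₂.1 (hdoms ▸ ⟨hyC, hyB⟩ : y ∈ doms P)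
    obtain ⟨htgt, hsrc, hcod⟩ := hP.anchored p hp
    have hr := hy p hp (Or.inl hyp)
    refine ⟨p.src, (mem_ball.1 (hsrc hyp)).trans hr, ?_⟩
    have := mem_ball.1 (hcod (glue_mem_cod (φ := φ) hP.pairwise_dom hp hyp))
    rw [htgt] at this
    exact this.trans hr
  by_cases hxP : x ∈ doms P
  · obtain ⟨p, hp, hxp⟩ := mem_iUnion₂.1 hxP
    refine (continuousOn_iff_continuous_domRestrict.2 ?_).continuousAt
      ((hP.isOpen_dom p hp).mem_nhds hxp)
    have : p.dom.domRestrict (glue P φ) = fun y => (p.homeo y : X) :=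
      funext fun y => glue_of_mem_dom hP.pairwise_dom hp y.2
    rw [this]
    exact continuous_subtype_val.comp p.homeo.continuous
  · have hxC : x ∉ C := fun h => hxP (hdoms ▸ ⟨h, hxB⟩)
    refine continuousAt_id.congr ?_
    filter_upwards [hC.1.isOpen_compl.mem_nhds hxC] with y hy
    exact (glue_of_not_mem (fun h => hy (hBC h)) fun h => hy (hdoms ▸ h).1).symm

theorem exists_homeomorph_eq_glue (hP : IsMatching φ P) {C : Set X} (hC : IsClopen C)
    (hBC : B ⊆ C) (hdoms : doms P = C \ B) (hcods : cods P = C \ B) (hshr : ShrinksTo B P) :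
    ∃ Φ : X ≃ₜ X, ⇑Φ = glue P φ := by
  have hdisj : Disjoint (doms P) B := hdoms ▸ disjoint_sdiff_left
  have hleft := glue_symm_glue hP (hcods.trans hdoms.symm) hdisj
  have hright := glue_symm_glue hP.image_symm (by simp [hcods, hdoms])
    (by simpa [hcods, hdoms] using hdisj)
  simp only [image_symm_image_symm, Homeomorph.symm_symm] at hright
  exact ⟨⟨⟨glue P φ, glue (symm '' P) φ.symm, hleft, hright⟩,
    continuous_glue hP hC hBC hdoms hshr,
    continuous_glue hP.image_symm hC hBC (by simpa using hcods) hshr.image_symm⟩, rfl⟩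

theorem dist_glue_le (hP : IsMatching φ P) {c R : ℝ} (hc0 : 0 ≤ c)
    (hc : ∀ b : B, dist (b : X) (φ b) ≤ c) (hR0 : 0 ≤ R) (hR : ∀ p ∈ P, p.radius ≤ R) (x : X) :
    dist x (glue P φ x) ≤ c + 2 * R := by
  by_cases hxP : x ∈ doms P
  · obtain ⟨p, hp, hxp⟩ := mem_iUnion₂.1 hxP
    obtain ⟨htgt, hsrc, hcod⟩ := hP.anchored p hp
    have h1 := mem_ball.1 (hsrc hxp)
    have h2 := mem_ball.1 (hcod (glue_mem_cod (φ := φ) hP.pairwise_dom hp hxp))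
    rw [htgt] at h2
    linarith [dist_triangle4 x p.src (φ p.src) (glue P φ x), hc p.src, hR p hp,
      dist_comm (glue P φ x) (φ p.src)]
  by_cases hxB : x ∈ B
  · rw [glue_of_mem hxB hxP]
    linarith [hc ⟨x, hxB⟩]
  · rw [glue_of_not_mem hxB hxP, dist_self]
    positivity

theorem doms_union (P Q : Set (Piece B)) : doms (P ∪ Q) = doms P ∪ doms Q := biUnion_union P Q _

theorem cods_union (P Q : Set (Piece B)) : cods (P ∪ Q) = cods P ∪ cods Q := biUnion_union P Q _

theorem IsMatching.union {Q : Set (Piece B)} (hP : IsMatching φ P) (hQ : IsMatching φ Q)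
    (hdoms : Disjoint (doms P) (doms Q)) (hcods : Disjoint (cods P) (cods Q)) :
    IsMatching φ (P ∪ Q) where
  anchored p hp := hp.elim (hP.anchored p) (hQ.anchored p)
  isOpen_dom p hp := hp.elim (hP.isOpen_dom p) (hQ.isOpen_dom p)
  isOpen_cod p hp := hp.elim (hP.isOpen_cod p) (hQ.isOpen_cod p)
  pairwise_dom := pairwise_union.2 ⟨hP.pairwise_dom, hQ.pairwise_dom, fun _ hp _ hq _ =>
    ⟨hdoms.mono (subset_biUnion_of_mem hp) (subset_biUnion_of_mem hq),
      (hdoms.mono (subset_biUnion_of_mem hp) (subset_biUnion_of_mem hq)).symm⟩⟩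
  pairwise_cod := pairwise_union.2 ⟨hP.pairwise_cod, hQ.pairwise_cod, fun _ hp _ hq _ =>
    ⟨hcods.mono (subset_biUnion_of_mem hp) (subset_biUnion_of_mem hq),
      (hcods.mono (subset_biUnion_of_mem hp) (subset_biUnion_of_mem hq)).symm⟩⟩

theorem IsMatching.iUnion {P : ℕ → Set (Piece B)} (hmono : Monotone P)
    (hP : ∀ k, IsMatching φ (P k)) : IsMatching φ (⋃ k, P k) where
  anchored p hp := (mem_iUnion.1 hp).elim fun k => (hP k).anchored p
  isOpen_dom p hp := (mem_iUnion.1 hp).elim fun k => (hP k).isOpen_dom p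
  isOpen_cod p hp := (mem_iUnion.1 hp).elim fun k => (hP k).isOpen_cod p
  pairwise_dom := (pairwise_iUnion hmono.directed_le).2 fun k => (hP k).pairwise_dom
  pairwise_cod := (pairwise_iUnion hmono.directed_le).2 fun k => (hP k).pairwise_cod

structure IsPartialMatching (φ : B ≃ₜ B) (C : Set X) (P : Set (Piece B)) : Prop where
  isMatching : IsMatching φ P
  isClopen_doms : IsClopen (doms P)
  isClopen_cods : IsClopen (cods P)
  doms_subset : doms P ⊆ C \ B
  cods_subset : cods P ⊆ C \ B

theorem IsPartialMatching.image_symm {C : Set X} (hP : IsPartialMatching φ C P) :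
    IsPartialMatching φ.symm C (symm '' P) := by
  refine ⟨hP.isMatching.image_symm, ?_, ?_, ?_, ?_⟩ <;>
    simp [hP.isClopen_doms, hP.isClopen_cods, hP.doms_subset, hP.cods_subset]

theorem isPartialMatching_empty (φ : B ≃ₜ B) (C : Set X) :
    IsPartialMatching φ C (∅ : Set (Piece B)) := by
  refine ⟨⟨?_, ?_, ?_, pairwise_empty _, pairwise_empty _⟩, ?_, ?_, ?_, ?_⟩ <;>
    simp [doms, cods, isClopen_empty]

theorem doms_iUnion (P : ℕ → Set (Piece B)) : doms (⋃ k, P k) = ⋃ k, doms (P k) :=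
  biUnion_iUnion P _

theorem cods_iUnion (P : ℕ → Set (Piece B)) : cods (⋃ k, P k) = ⋃ k, cods (P k) :=
  biUnion_iUnion P _

theorem shrinksTo_iUnion {φ : B ≃ₜ B} {C : Set X} {P : ℕ → Set (Piece B)}
    (hP : ∀ k, IsPartialMatching φ C (P k)) {r : ℕ → ℝ} (hr : Tendsto r atTop (𝓝 0))
    (hrad : ∀ k, ∀ p ∈ ⋃ j, P j, p ∉ P k → p.radius ≤ r k) : ShrinksTo B (⋃ k, P k) := by
  intro b hb δ hδ
  obtain ⟨k, hk⟩ := (hr.eventually (gt_mem_nhds hδ)).exists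
  have hopen : IsOpen (doms (P k) ∪ cods (P k))ᶜ :=
    ((hP k).isClopen_doms.union (hP k).isClopen_cods).1.isOpen_compl
  have hb' : b ∈ (doms (P k) ∪ cods (P k))ᶜ := fun h =>
    h.elim (fun h => ((hP k).doms_subset h).2 hb) fun h => ((hP k).cods_subset h).2 hb
  filter_upwards [hopen.mem_nhds hb'] with x hx p hp hxp
  have hpk : p ∉ P k := fun h => hx (hxp.imp (mem_biUnion h) (mem_biUnion h))
  exact (hrad k p hp hpk).trans_lt hk

end Piece

open Piece

variable (hz : StronglyZeroDim X) (hh : HHomogeneous X)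

include hz hh in
/-- Cut `E` into small clopen pieces and send each one to a clopen copy near the `φ`-image of an
anchor in `B`. -/
theorem exists_isMatching_doms_eq (hB : IsClosed B) (hBd : Dense Bᶜ) (φ : B ≃ₜ B)
    {E O : Set X} (hE : IsClopen E) {s : ℝ} (hs : 0 < s) (hEs : E ⊆ thickening s B)
    (hO : IsClopen O) (hOB : Disjoint O B) :
    ∃ Q : Set (Piece B), IsMatching φ Q ∧ (∀ q ∈ Q, q.radius = 2 * s) ∧ doms Q = E ∧
      IsClopen (cods Q) ∧ Disjoint (cods Q) (B ∪ O) := by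
  obtain ⟨w, hw, hwd, hwE, hwball⟩ := hz.exists_isClopen_partition_ball hE hs
  choose α hα using fun i : E => mem_thickening_iff.1 (hEs i.2)
  have hy : ∀ i, (φ ⟨α i, (hα i).1⟩ : X) ∈ closure (B ∪ O)ᶜ := fun i => by
    rw [compl_union, inter_comm]
    exact hBd.open_subset_closure_inter hO.1.isOpen_compl
      fun h => hOB.le_bot ⟨h, (φ ⟨α i, (hα i).1⟩).2⟩
  obtain ⟨v, e, hv, hvd, hvU⟩ :=
    hh.exists_isClopen_copies_near hz (hB.union hO.1) hw hwd (hwE.symm ▸ hE.1) hy hs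
  let piece (i : E) : Piece B :=
    ⟨w i, v i, e i, ⟨α i, (hα i).1⟩, φ ⟨α i, (hα i).1⟩, 2 * s⟩
  have hdoms : doms (range piece) = E := by rw [doms, biUnion_range]; exact hwE
  have hcods : cods (range piece) = ⋃ i, v i := by rw [cods, biUnion_range]
  refine ⟨range piece, ⟨?_, ?_, ?_, ?_, ?_⟩, forall_mem_range.2 fun i => rfl, hdoms,
    hcods ▸ hvU, hcods ▸ disjoint_iUnion_left.2 fun i => (hv i).2.2⟩
  · refine forall_mem_range.2 fun i => ⟨rfl, fun x hx => ?_, (hv i).2.1⟩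
    have := mem_ball.1 (hwball i hx)
    rw [mem_ball]
    linarith [dist_triangle x i (α i), (hα i).2]
  · exact forall_mem_range.2 fun i => (hw i).2
  · exact forall_mem_range.2 fun i => (hv i).1.2
  · rintro _ ⟨i, rfl⟩ _ ⟨j, rfl⟩ hne
    exact hwd fun h => hne (h ▸ rfl)
  · rintro _ ⟨i, rfl⟩ _ ⟨j, rfl⟩ hne
    exact hvd fun h => hne (h ▸ rfl)

include hz hh in
theorem Piece.IsPartialMatching.exists_extend_doms (hB : IsClosed B) (hBd : Dense Bᶜ)
    {φ : B ≃ₜ B} {C : Set X} {P : Set (Piece B)} (hP : IsPartialMatching φ C P)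
    (hC : IsClopen C) (hBC : B ⊆ C) {R : Set X} (hR : IsClopen R) (hRC : R ⊆ C \ B) {s : ℝ}
    (hs : 0 < s) (hRs : R ⊆ thickening s B) :
    ∃ Q : Set (Piece B), (∀ q ∈ Q, q.radius = 2 * s) ∧ IsPartialMatching φ C (P ∪ Q) ∧
      R ⊆ doms (P ∪ Q) := by
  have hOB : Disjoint (cods P ∪ Cᶜ) B := disjoint_union_left.2
    ⟨disjoint_left.2 fun _ hx => (hP.cods_subset hx).2,
      disjoint_left.2 fun _ hx hxB => hx (hBC hxB)⟩
  obtain ⟨Q, hQ, hQr, hQdoms, hQcods, hQdisj⟩ := exists_isMatching_doms_eq hz hh hB hBd φ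
    (hR.diff hP.isClopen_doms) hs (sdiff_subset.trans hRs) (hP.isClopen_cods.union hC.compl) hOB
  have hQC : cods Q ⊆ C \ B := fun x hx =>
    ⟨by_contra fun h => hQdisj.le_bot ⟨hx, Or.inr (Or.inr h)⟩,
      fun h => hQdisj.le_bot ⟨hx, Or.inl h⟩⟩
  refine ⟨Q, hQr, ⟨hP.isMatching.union hQ ?_ ?_, ?_, ?_, ?_, ?_⟩, ?_⟩
  · exact hQdoms ▸ disjoint_sdiff_right
  · exact (hQdisj.mono_right (subset_union_left.trans subset_union_right)).symm
  · rw [doms_union, hQdoms]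
    exact hP.isClopen_doms.union (hR.diff hP.isClopen_doms)
  · rw [cods_union]
    exact hP.isClopen_cods.union hQcods
  · rw [doms_union, hQdoms]
    exact union_subset hP.doms_subset (sdiff_subset.trans hRC)
  · rw [cods_union]
    exact union_subset hP.cods_subset hQC
  · rw [doms_union, hQdoms, union_sdiff_self]
    exact subset_union_right

include hz hh in
/-- The back-and-forth step: first cover `R` by domains, then (for `φ⁻¹`) by codomains. -/
theorem Piece.IsPartialMatching.exists_extend (hB : IsClosed B) (hBd : Dense Bᶜ)
    {φ : B ≃ₜ B} {C : Set X} {P : Set (Piece B)} (hP : IsPartialMatching φ C P)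
    (hC : IsClopen C) (hBC : B ⊆ C) {R : Set X} (hR : IsClopen R) (hRC : R ⊆ C \ B) {s : ℝ}
    (hs : 0 < s) (hRs : R ⊆ thickening s B) :
    ∃ Q : Set (Piece B), (∀ q ∈ Q, q.radius = 2 * s) ∧ IsPartialMatching φ C (P ∪ Q) ∧
      R ⊆ doms (P ∪ Q) ∧ R ⊆ cods (P ∪ Q) := by
  obtain ⟨Q₁, hQ₁r, hP₁, hR₁⟩ := hP.exists_extend_doms hz hh hB hBd hC hBC hR hRC hs hRs
  obtain ⟨Q₂, hQ₂r, hP₂, hR₂⟩ :=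
    hP₁.image_symm.exists_extend_doms hz hh hB hBd hC hBC hR hRC hs hRs
  have heq : symm '' (symm '' (P ∪ Q₁) ∪ Q₂) = P ∪ (Q₁ ∪ symm '' Q₂) := by
    rw [image_union, image_symm_image_symm, union_assoc]
  refine ⟨Q₁ ∪ symm '' Q₂, ?_, ?_, ?_, ?_⟩
  · rintro q (hq | ⟨q, hq, rfl⟩)
    exacts [hQ₁r q hq, hQ₂r q hq]
  · simpa only [heq, Homeomorph.symm_symm] using hP₂.image_symm
  · rw [← union_assoc, doms_union]
    exact hR₁.trans subset_union_left
  · rw [← heq, cods_image_symm]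
    exact hR₂

include hz hh in
theorem Piece.IsPartialMatching.exists_extend_ring (hB : IsClosed B) (hBd : Dense Bᶜ)
    {φ : B ≃ₜ B} {s : ℕ → ℝ} (hs : ∀ n, 0 < s n) {C : ℕ → Set X} (hCa : Antitone C)
    (hC : ∀ n, IsClopen (C n) ∧ B ⊆ C n ∧ C n ⊆ thickening (s n) B) {k : ℕ}
    {P : Set (Piece B)} (hP : IsPartialMatching φ (C 0) P) (hcov : C 0 \ C k ⊆ doms P ∩ cods P) :
    ∃ Q : Set (Piece B), (∀ q ∈ Q, q.radius = 2 * s k) ∧ IsPartialMatching φ (C 0) (P ∪ Q) ∧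
      C 0 \ C (k + 1) ⊆ doms (P ∪ Q) ∩ cods (P ∪ Q) := by
  have hRC : C k \ C (k + 1) ⊆ C 0 \ B :=
    fun x hx => ⟨hCa (Nat.zero_le k) hx.1, fun hxB => hx.2 ((hC (k + 1)).2.1 hxB)⟩
  obtain ⟨Q, hQr, hPQ, hd, hc⟩ := hP.exists_extend hz hh hB hBd (hC 0).1 (hC 0).2.1
    ((hC k).1.diff (hC (k + 1)).1) hRC (hs k) (sdiff_subset.trans (hC k).2.2)
  refine ⟨Q, hQr, hPQ, fun x hx => ?_⟩
  by_cases hxk : x ∈ C k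
  · exact ⟨hd ⟨hxk, hx.2⟩, hc ⟨hxk, hx.2⟩⟩
  · obtain ⟨h1, h2⟩ := hcov ⟨hx.1, hxk⟩
    rw [doms_union, cods_union]
    exact ⟨Or.inl h1, Or.inl h2⟩

include hz hh in
/-- The rings `C k \ C (k + 1)` are matched one after another at scale `s k`; since the sets
`C k` shrink to `B`, pieces met near `B` come from late rings. -/
theorem exists_isMatching_shrinksTo (hB : IsClosed B) (hBd : Dense Bᶜ) (φ : B ≃ₜ B)
    {s : ℕ → ℝ} (hs : ∀ n, 0 < s n) (hsa : Antitone s) (hs0 : Tendsto s atTop (𝓝 0))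
    {C : ℕ → Set X} (hCa : Antitone C)
    (hC : ∀ n, IsClopen (C n) ∧ B ⊆ C n ∧ C n ⊆ thickening (s n) B) :
    ∃ P : Set (Piece B), IsMatching φ P ∧ doms P = C 0 \ B ∧ cods P = C 0 \ B ∧
      ShrinksTo B P ∧ ∀ p ∈ P, p.radius ≤ 2 * s 0 := by
  choose! Q hQr hQ using fun k P (hP : IsPartialMatching φ (C 0) P) =>
    hP.exists_extend_ring hz hh hB hBd hs hCa hC (k := k)
  let seq : ℕ → Set (Piece B) := fun k => Nat.rec ∅ (fun k P => P ∪ Q k P) k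
  have hseq : ∀ k, IsPartialMatching φ (C 0) (seq k) ∧ C 0 \ C k ⊆ doms (seq k) ∩ cods (seq k) := by
    intro k
    induction k with
    | zero => exact ⟨isPartialMatching_empty φ _, by simp⟩
    | succ k ih => exact hQ k _ ih.1 ih.2
  have hmono : Monotone seq := monotone_nat_of_le_succ fun k => subset_union_left
  have hrad : ∀ k, ∀ p ∈ ⋃ j, seq j, p ∉ seq k → p.radius ≤ 2 * s k := by
    intro k p hp hpk
    obtain ⟨j, hj⟩ := mem_iUnion.1 hp
    induction j with
    | zero => exact absurd hj (notMem_empty p)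
    | succ j ih =>
      refine hj.elim ih fun hpQ => ?_
      have hkj : k ≤ j := by
        by_contra! h
        exact hpk (hmono h (subset_union_right hpQ : p ∈ seq (j + 1)))
      rw [hQr j _ (hseq j).1 (hseq j).2 p hpQ]
      linarith [hsa hkj]
  have hcov : C 0 \ B ⊆ ⋃ k, doms (seq k) ∩ cods (seq k) := fun x hx => by
    obtain ⟨k, hk⟩ := exists_notMem_of_subset_thickening hB hs0 (fun n => (hC n).2.2) hx.2
    exact mem_iUnion.2 ⟨k, (hseq k).2 ⟨hx.1, hk⟩⟩
  refine ⟨⋃ k, seq k, IsMatching.iUnion hmono fun k => (hseq k).1.isMatching, ?_, ?_,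
    shrinksTo_iUnion (fun k => (hseq k).1) (by simpa using hs0.const_mul 2) hrad,
    fun p hp => hrad 0 p hp (notMem_empty p)⟩
  · exact (doms_iUnion seq).trans <| (iUnion_subset fun k => (hseq k).1.doms_subset).antisymm
      (hcov.trans (iUnion_mono fun k => inter_subset_left))
  · exact (cods_iUnion seq).trans <| (iUnion_subset fun k => (hseq k).1.cods_subset).antisymm
      (hcov.trans (iUnion_mono fun k => inter_subset_right))

include hz hh in
theorem HHomogeneous.exists_homeomorph_extend (hB : IsClosed B) (hBd : Dense Bᶜ) (φ : B ≃ₜ B)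
    {c δ : ℝ} (hc0 : 0 ≤ c) (hc : ∀ b : B, dist (b : X) (φ b) ≤ c) (hδ : 0 < δ) :
    ∃ Φ : X ≃ₜ X, (∀ b : B, Φ b = φ b) ∧ ∀ x, dist x (Φ x) ≤ c + δ := by
  let s : ℕ → ℝ := fun n => δ / 4 * (1 / ((n : ℝ) + 1))
  have hs : ∀ n, 0 < s n := fun n => by positivity
  have hsa : Antitone s := fun m n hmn => by
    dsimp only [s]
    gcongr
  have hs0 : Tendsto s atTop (𝓝 0) := by
    simpa [s] using tendsto_one_div_add_atTop_nhds_zero_nat.const_mul (δ / 4)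
  obtain ⟨C, hCa, hC⟩ := hz.exists_antitone_isClopen_subset_thickening hB hs
  obtain ⟨P, hP, hdoms, hcods, hshr, hrad⟩ :=
    exists_isMatching_shrinksTo hz hh hB hBd φ hs hsa hs0 hCa hC
  obtain ⟨Φ, hΦ⟩ := exists_homeomorph_eq_glue hP (hC 0).1 (hC 0).2.1 hdoms hcods hshr
  refine ⟨Φ, fun b => ?_, fun x => ?_⟩
  · rw [hΦ, glue_of_mem b.2 fun h => (hdoms ▸ h).2 b.2]
  · have := dist_glue_le hP hc0 hc (by positivity) hrad x
    rw [hΦ]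
    convert this using 2
    simp only [s]
    ring

end Pieces

theorem stmt_2_general {X₁ : Type u} {X₂ : Type v} [MetricSpace X₁] [MetricSpace X₂]
    (hz₂ : StronglyZeroDim X₂) (hh₂ : HHomogeneous X₂)
    (A₁ : Set X₁) (A₂ : Set X₂)
    (hA₂ : IsClosed A₂) (hA₂' : IsNowhereDense A₂)
    (g : X₁ ≃ₜ X₂) (hg : g '' A₁ = A₂)
    (f₀ : ↥A₁ ≃ₜ ↥A₂) (ε : ℝ) (hε : 0 < ε)
    (hclose : ∃ c < ε, ∀ a : ↥A₁, dist (g (a : X₁)) ((f₀ a : X₂)) ≤ c) :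
    ∃ f : X₁ ≃ₜ X₂, (∀ a : ↥A₁, f (a : X₁) = (f₀ a : X₂)) ∧
      ∃ c < ε, ∀ x : X₁, dist (g x) (f x) ≤ c := by
  obtain ⟨c, hcε, hc⟩ := hclose
  let e : A₁ ≃ₜ A₂ := (g.image A₁).trans (Homeomorph.setCongr hg)
  have he : ∀ a, (e a : X₂) = g a := fun _ => rfl
  have hφ : ∀ b : A₂, dist (b : X₂) (e.symm.trans f₀ b) ≤ max c 0 := fun b => by
    rw [← e.apply_symm_apply b, he, e.apply_symm_apply]
    exact (hc (e.symm b)).trans (le_max_left c 0)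
  have hBd : Dense A₂ᶜ := interior_eq_empty_iff_dense_compl.1 (hA₂.isNowhereDense_iff.1 hA₂')
  have hcε' : max c 0 < ε := max_lt hcε hε
  obtain ⟨Φ, hΦ, hΦd⟩ := hh₂.exists_homeomorph_extend hz₂ hA₂ hBd (e.symm.trans f₀)
    (le_max_right c 0) hφ (half_pos (sub_pos.2 hcε'))
  refine ⟨g.trans Φ, fun a => ?_, max c 0 + (ε - max c 0) / 2, by linarith, fun x => hΦd (g x)⟩
  simpa [he] using hΦ (e a)

/-- extending a homeomorphism of nowhere dense closed subsets of
h-homogeneous spaces, staying `ε`-close to a given global homeomorphism. -/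
theorem stmt_2 {X₁ : Type u} {X₂ : Type v} [MetricSpace X₁] [MetricSpace X₂]
    (hz₁ : StronglyZeroDim X₁) (hz₂ : StronglyZeroDim X₂)
    (hh₁ : HHomogeneous X₁) (hh₂ : HHomogeneous X₂)
    (A₁ : Set X₁) (A₂ : Set X₂)
    (hA₁ : IsClosed A₁) (hA₁' : IsNowhereDense A₁)
    (hA₂ : IsClosed A₂) (hA₂' : IsNowhereDense A₂)
    (g : X₁ ≃ₜ X₂) (hg : g '' A₁ = A₂)
    (f₀ : ↥A₁ ≃ₜ ↥A₂) (ε : ℝ) (hε : 0 < ε)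
    (hclose : ∃ c < ε, ∀ a : ↥A₁, dist (g (a : X₁)) ((f₀ a : X₂)) ≤ c) :
    ∃ f : X₁ ≃ₜ X₂, (∀ a : ↥A₁, f (a : X₁) = (f₀ a : X₂)) ∧
      ∃ c < ε, ∀ x : X₁, dist (g x) (f x) ≤ c :=
  stmt_2_general hz₂ hh₂ A₁ A₂ hA₂ hA₂' g hg f₀ ε hε hclose
end
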